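/- Let φ be a HyLTL⁺ formula over A and FC, and let 𝒜 be a Büchi automaton over the alphabet of subsets of AP = FC ⊎ B whose accepted language is exactly the set of discrete sequences Σ with Σ,1 ⊨ γ(φ). Then for every hybrid trace α over A and X: α,1 ⊨ φ if and only if 𝒜 accepts Σ(α). -/

import Mathlib

/-! ## Valus, trajectories and flow constraints -/

/-- A valuation over the variables `X`. -/
abbrev Valu (X : Type) := X → ℝ

/-- A flow constraint over `X`: a set of pairs (value, derivative) of valuations. -/
abbrev FlowConstraint (X : Type) := Set (Valu X × Valu X)

/-- A trajectory over `X`: a nonnegative duration together with a map `ℝ → Valu X`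
(only its values on `[0, dur]` matter). -/
structure Traj (X : Type) where
  dur : ℝ
  dur_nonneg : 0 ≤ dur
  f : ℝ → Valu X

namespace Traj

variable {X : Type}

/-- A trajectory satisfies a flow constraint iff at every time of its domain the pair
(value, derivative) belongs to the constraint. -/
def sat (τ : Traj X) (C : FlowConstraint X) : Prop :=
  ∀ t ∈ Set.Icc (0 : ℝ) τ.dur,
    (τ.f t, fun x => deriv (fun s => τ.f s x) t) ∈ C

def firstState (τ : Traj X) : Valu X := τ.f 0

def lastState (τ : Traj X) : Valu X := τ.f τ.dur

/-- Identification of trajectories: same duration and same values on the domain. -/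
def Equiv (τ τ' : Traj X) : Prop :=
  τ.dur = τ'.dur ∧ ∀ t ∈ Set.Icc (0 : ℝ) τ.dur, τ.f t = τ'.f t

/-- The restriction `τ↾[t,t']` of a trajectory. -/
def restrict (τ : Traj X) (t t' : ℝ) (h : t ≤ t') : Traj X :=
  ⟨t' - t, sub_nonneg.mpr h, fun s => τ.f (s + t)⟩

/-- Concatenation of two trajectories. -/
noncomputable def concat (τ₁ τ₂ : Traj X) : Traj X :=
  ⟨τ₁.dur + τ₂.dur, add_nonneg τ₁.dur_nonneg τ₂.dur_nonneg,
   fun s => if s ≤ τ₁.dur then τ₁.f s else τ₂.f (s - τ₁.dur)⟩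

end Traj

/-! ## Hybrid traces -/

/-- A hybrid trace `τ₁ a₁ τ₂ a₂ …` over `A` and `X`, 0-indexed:
`traj n` is `τ_{n+1}` and `act n` is `a_{n+1}`. -/
structure HybridTrace (X A : Type) where
  traj : ℕ → Traj X
  act : ℕ → A

/-- Concatenation `g m · g (m+1) · ⋯ · g n` of a segment of trajectories. -/
noncomputable def concatSeg {X : Type} (g : ℕ → Traj X) (m n : ℕ) : Traj X :=
  ((List.range (n - m)).map (fun i => g (m + 1 + i))).foldl Traj.concat (g m)

/-- A hybrid trace over `A ∪ {T}` (with `T = none`) has infinitely many actions in `A`. -/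
def HybridTrace.InfA {X A : Type} (β : HybridTrace X (Option A)) : Prop :=
  ∀ N, ∃ n, N ≤ n ∧ (β.act n).isSome

/-- The restriction `β↾A` of a hybrid trace over `A ∪ {T}` (with `T = none`) to `A`:
delete the occurrences of `T` and concatenate the adjacent trajectories.  (It is
intended to be applied to traces having infinitely many actions in `A`.) -/
noncomputable def HybridTrace.restrictA {X A : Type} [Inhabited A]
    (β : HybridTrace X (Option A)) : HybridTrace X A :=
  letI k : ℕ → ℕ := Nat.nth (fun n => (β.act n).isSome)
  { traj := fun i =>
      match i with
      | 0 => concatSeg β.traj 0 (k 0)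
      | i + 1 => concatSeg β.traj (k i + 1) (k (i + 1))
    act := fun i => (β.act (k i)).getD default }

/-- Identification of hybrid traces (pointwise identification of trajectories). -/
def HybridTrace.Equiv {X A : Type} (α α' : HybridTrace X A) : Prop :=
  (∀ i, (α.traj i).Equiv (α'.traj i)) ∧ ∀ i, α.act i = α'.act i

/-! ## HyLTL syntax and semantics -/

/-- HyLTL formulas over actions `A` and flow-constraint atoms `F`. -/
inductive HyLTL (A F : Type) : Type where
  | flow : F → HyLTL A F
  | act : A → HyLTL A F
  | not : HyLTL A F → HyLTL A F
  | and : HyLTL A F → HyLTL A F → HyLTL A F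
  | or : HyLTL A F → HyLTL A F → HyLTL A F
  | next : HyLTL A F → HyLTL A F
  | untl : HyLTL A F → HyLTL A F → HyLTL A F
  | rel : HyLTL A F → HyLTL A F → HyLTL A F

/-- Satisfaction of a HyLTL formula by a hybrid trace at a (0-indexed) position;
`I` interprets flow-constraint atoms.  Position `i` here is position `i+1` of the paper. -/
def HyLTL.Sat {X A F : Type} (I : F → FlowConstraint X) (α : HybridTrace X A) :
    HyLTL A F → ℕ → Prop
  | .flow f, i => (α.traj i).sat (I f)
  | .act a, i => 0 < i ∧ α.act (i - 1) = a
  | .not φ, i => ¬ HyLTL.Sat I α φ i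
  | .and φ ψ, i => HyLTL.Sat I α φ i ∧ HyLTL.Sat I α ψ i
  | .or φ ψ, i => HyLTL.Sat I α φ i ∨ HyLTL.Sat I α ψ i
  | .next φ, i => HyLTL.Sat I α φ (i + 1)
  | .untl φ ψ, i =>
      ∃ j, i ≤ j ∧ HyLTL.Sat I α ψ j ∧ ∀ k, i ≤ k → k < j → HyLTL.Sat I α φ k
  | .rel φ ψ, i =>
      ∀ j, i ≤ j → (∀ k, i ≤ k → k < j → ¬ HyLTL.Sat I α φ k) → HyLTL.Sat I α ψ j

/-- Negation normal form: negation applied only to actions and flow constraints. -/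
inductive HyLTL.NNF {A F : Type} : HyLTL A F → Prop
  | flow (f : F) : NNF (.flow f)
  | act (a : A) : NNF (.act a)
  | nflow (f : F) : NNF (.not (.flow f))
  | nact (a : A) : NNF (.not (.act a))
  | and {φ ψ} : NNF φ → NNF ψ → NNF (.and φ ψ)
  | or {φ ψ} : NNF φ → NNF ψ → NNF (.or φ ψ)
  | next {φ} : NNF φ → NNF (.next φ)
  | untl {φ ψ} : NNF φ → NNF ψ → NNF (.untl φ ψ)
  | rel {φ ψ} : NNF φ → NNF ψ → NNF (.rel φ ψ)

/-- HyLTL⁺ formulas: flow constraints occur only positively. -/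
inductive HyLTL.Positive {A F : Type} : HyLTL A F → Prop
  | flow (f : F) : Positive (.flow f)
  | act (a : A) : Positive (.act a)
  | nact (a : A) : Positive (.not (.act a))
  | and {φ ψ} : Positive φ → Positive ψ → Positive (.and φ ψ)
  | or {φ ψ} : Positive φ → Positive ψ → Positive (.or φ ψ)
  | next {φ} : Positive φ → Positive (.next φ)
  | untl {φ ψ} : Positive φ → Positive ψ → Positive (.untl φ ψ)
  | rel {φ ψ} : Positive φ → Positive ψ → Positive (.rel φ ψ)

/-- The translation π from NNF HyLTL formulas over `A` to HyLTL⁺ formulas over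
`A ∪ {T}`, where the fresh action `T` is `none` and flow atoms are semantic flow
constraints (so that the dual constraint `f̄` is the set complement `fᶜ`). -/
def piTr {X A : Type} : HyLTL A (FlowConstraint X) → HyLTL (Option A) (FlowConstraint X)
  | .flow f =>
      .and (.flow f) (.next (.untl (.and (.act none) (.flow f)) (.not (.act none))))
  | .act a => .act (some a)
  | .not (.flow f) =>
      .or (.flow fᶜ) (.next (.untl (.act none) (.and (.act none) (.flow fᶜ))))
  | .not (.act a) => .not (.act (some a))
  | .not φ => .not (piTr φ)
  | .and φ ψ => .and (piTr φ) (piTr ψ)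
  | .or φ ψ => .or (piTr φ) (piTr ψ)
  | .next φ => .next (.untl (.act none) (.and (.not (.act none)) (piTr φ)))
  | .untl φ ψ => .untl (.or (.act none) (piTr φ)) (.and (.not (.act none)) (piTr ψ))
  | .rel φ ψ => .rel (.and (.not (.act none)) (piTr φ)) (.or (.act none) (piTr ψ))

/-! ## Discrete LTL -/

/-- LTL formulas over atomic propositions `P`. -/
inductive LTL (P : Type) : Type where
  | atom : P → LTL P
  | not : LTL P → LTL P
  | and : LTL P → LTL P → LTL P
  | or : LTL P → LTL P → LTL P
  | next : LTL P → LTL P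
  | untl : LTL P → LTL P → LTL P
  | rel : LTL P → LTL P → LTL P

/-- Satisfaction of an LTL formula by a discrete sequence (0-indexed: position `i`
here is position `i+1` of the paper). -/
def LTL.Sat {P : Type} (w : ℕ → Set P) : LTL P → ℕ → Prop
  | .atom p, i => p ∈ w i
  | .not γ, i => ¬ LTL.Sat w γ i
  | .and γ δ, i => LTL.Sat w γ i ∧ LTL.Sat w δ i
  | .or γ δ, i => LTL.Sat w γ i ∨ LTL.Sat w δ i
  | .next γ, i => LTL.Sat w γ (i + 1)
  | .untl γ δ, i =>
      ∃ j, i ≤ j ∧ LTL.Sat w δ j ∧ ∀ k, i ≤ k → k < j → LTL.Sat w γ k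
  | .rel γ δ, i =>
      ∀ j, i ≤ j → (∀ k, i ≤ k → k < j → ¬ LTL.Sat w γ k) → LTL.Sat w δ j

/-- Conjunction `γ₁ ∧ (γ₂ ∧ (⋯ ∧ γₙ))` of a nonempty list of LTL formulas. -/
def LTL.bigConj {P : Type} : (l : List (LTL P)) → l ≠ [] → LTL P
  | [], h => absurd rfl h
  | [γ], _ => γ
  | γ :: δ :: l, _ => .and γ (LTL.bigConj (δ :: l) (by simp))

/-- `γ` contains no atom from `FC` (the left summand). -/
def LTL.noFC {FC B : Type} : LTL (FC ⊕ B) → Prop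
  | .atom (Sum.inl _) => False
  | .atom (Sum.inr _) => True
  | .not γ => LTL.noFC γ
  | .and γ δ => LTL.noFC γ ∧ LTL.noFC δ
  | .or γ δ => LTL.noFC γ ∧ LTL.noFC δ
  | .next γ => LTL.noFC γ
  | .untl γ δ => LTL.noFC γ ∧ LTL.noFC δ
  | .rel γ δ => LTL.noFC γ ∧ LTL.noFC δ

/-- `γ` is FC-positive: no atom from `FC` occurs within the scope of a negation. -/
def LTL.FCpos {FC B : Type} : LTL (FC ⊕ B) → Prop
  | .atom _ => True
  | .not γ => LTL.noFC γ
  | .and γ δ => LTL.FCpos γ ∧ LTL.FCpos δ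
  | .or γ δ => LTL.FCpos γ ∧ LTL.FCpos δ
  | .next γ => LTL.FCpos γ
  | .untl γ δ => LTL.FCpos γ ∧ LTL.FCpos δ
  | .rel γ δ => LTL.FCpos γ ∧ LTL.FCpos δ

/-! ## The translation γ from HyLTL to LTL -/

/-- The formula `𝐛(a)`: the conjunction of the letters in `b a` and of the negations
of the letters not in `b a` (given that `b a` is nonempty). -/
noncomputable def bEnc {A FC B : Type} [Fintype B] [DecidableEq B]
    (b : A → Finset B) (hb : ∀ a, (b a).Nonempty) (a : A) : LTL (FC ⊕ B) :=
  LTL.bigConj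
    (((b a).toList.map fun j => LTL.atom (Sum.inr j : FC ⊕ B)) ++
      ((Finset.univ \ b a).toList.map fun j => LTL.not (LTL.atom (Sum.inr j : FC ⊕ B))))
    (by
      intro h
      rcases List.append_eq_nil_iff.mp h with ⟨h1, -⟩
      exact (hb a).ne_empty (Finset.toList_eq_nil.mp (List.map_eq_nil_iff.mp h1)))

/-- The translation γ₀ from HyLTL formulas over `A` and `FC` to LTL formulas over
`AP = FC ⊎ B`. -/
noncomputable def gamma0 {A FC B : Type} [Fintype B] [DecidableEq B]
    (b : A → Finset B) (hb : ∀ a, (b a).Nonempty) :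
    HyLTL A FC → LTL (FC ⊕ B)
  | .flow f => .atom (Sum.inl f)
  | .act a => bEnc b hb a
  | .not φ => .not (gamma0 b hb φ)
  | .and φ ψ => .and (gamma0 b hb φ) (gamma0 b hb ψ)
  | .or φ ψ => .or (gamma0 b hb φ) (gamma0 b hb ψ)
  | .next φ => .next (gamma0 b hb φ)
  | .untl φ ψ => .untl (gamma0 b hb φ) (gamma0 b hb ψ)
  | .rel φ ψ => .rel (gamma0 b hb φ) (gamma0 b hb ψ)

/-- The translation `γ(φ) = (⋀_{j ∈ B} ¬ bⱼ) ∧ γ₀(φ)`. -/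
noncomputable def gammaTr {A FC B : Type} [Fintype B] [DecidableEq B]
    (b : A → Finset B) (hb : ∀ a, (b a).Nonempty) (φ : HyLTL A FC) : LTL (FC ⊕ B) :=
  LTL.bigConj
    (((Finset.univ : Finset B).toList.map fun j =>
        LTL.not (LTL.atom (Sum.inr j : FC ⊕ B))) ++ [gamma0 b hb φ])
    (by simp)

/-- The discrete sequence `Σ(α)` associated with a hybrid trace `α` (0-indexed). -/
noncomputable def SigmaTrace {X A FC B : Type}
    (I : FC → FlowConstraint X) (b : A → Finset B) (α : HybridTrace X A) :
    ℕ → Set (FC ⊕ B)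
  | 0 => Sum.inl '' {f | (α.traj 0).sat (I f)}
  | n + 1 => Sum.inl '' {f | (α.traj (n + 1)).sat (I f)} ∪ Sum.inr '' ↑(b (α.act n))

/-! ## Büchi automata -/

/-- A Büchi automaton over the alphabet `Λ` with states `Q`. -/
structure Buchi (Q Λ : Type) where
  init : Q
  tr : Set (Q × Λ × Q)
  acc : Set Q

/-- A Büchi automaton accepts an infinite word (0-indexed) iff it has a run over
it visiting some accepting state infinitely often. -/
def Buchi.Accepts {Q Λ : Type} (𝒜 : Buchi Q Λ) (w : ℕ → Λ) : Prop :=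
  ∃ r : ℕ → Q, r 0 = 𝒜.init ∧ (∀ n, (r n, w n, r (n + 1)) ∈ 𝒜.tr) ∧
    ∃ q ∈ 𝒜.acc, ∀ N, ∃ n, N ≤ n ∧ r n = q

/-! ## Hybrid automata with Büchi condition -/

/-- A hybrid automaton with Büchi acceptance condition (BHA) over `X` and `A`. -/
structure BHA (X A : Type) where
  Loc : Type
  locFinite : Finite Loc
  Edg : Set (Loc × A × Loc)
  Dyn : Loc → FlowConstraint X
  Rst : Loc × A × Loc → Set (Valu X × Valu X)
  Init : Set Loc
  Final : Set Loc

/-- Acceptance of a hybrid trace by a BHA. -/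
def BHA.Accepts {X A : Type} (H : BHA X A) (α : HybridTrace X A) : Prop :=
  ∃ ℓ : ℕ → H.Loc,
    ℓ 0 ∈ H.Init ∧
    (∀ i, (α.traj i).sat (H.Dyn (ℓ i)) ∧
      (ℓ i, α.act i, ℓ (i + 1)) ∈ H.Edg ∧
      ((α.traj i).lastState, (α.traj (i + 1)).firstState) ∈
        H.Rst (ℓ i, α.act i, ℓ (i + 1))) ∧
    ∃ l ∈ H.Final, ∀ N, ∃ n, N ≤ n ∧ ℓ n = l

/-- The BHA `ℋ_φ` constructed (as in Algorithm 1, without reachability pruning) from a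
Büchi automaton over the alphabet of subsets of `AP = FC ⊎ B`. -/
def HofBuchi {X A FC B Q : Type} [Finite Q] [Finite FC]
    (I : FC → FlowConstraint X) (b : A → Finset B)
    (𝒜 : Buchi Q (Set (FC ⊕ B))) : BHA X A where
  Loc := Q × Set FC
  locFinite := inferInstance
  Edg := {e | ∃ σ : Set (FC ⊕ B),
    (e.1.1, σ, e.2.2.1) ∈ 𝒜.tr ∧
    {f | Sum.inl f ∈ σ} = e.2.2.2 ∧
    {j | Sum.inr j ∈ σ} = ↑(b e.2.1)}
  Dyn := fun l => {p | ∀ f ∈ l.2, p ∈ I f}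
  Rst := fun _ => Set.univ
  Init := {l | ∃ σ : Set (FC ⊕ B),
    (𝒜.init, σ, l.1) ∈ 𝒜.tr ∧
    {f | Sum.inl f ∈ σ} = l.2 ∧
    {j : B | Sum.inr j ∈ σ} = ∅}
  Final := {l | l.1 ∈ 𝒜.acc}

/-!
`Σ(α)` records at each position exactly the flow constraints met by the current trajectory and,
through the injective code `b`, the action that precedes it, so `γ₀(φ)` holds of `Σ(α)` exactly
where `φ` holds of `α`, by structural induction on `φ`. No letter of `B` holds at the first
position of `Σ(α)`, so the extra conjunct `⋀ ¬bᵢ` of `γ(φ)` is automatic there.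
-/

theorem LTL.sat_bigConj {P : Type} (w : ℕ → Set P) :
    ∀ (l : List (LTL P)) (h : l ≠ []) (i : ℕ),
      LTL.Sat w (LTL.bigConj l h) i ↔ ∀ γ ∈ l, LTL.Sat w γ i
  | [], h, _ => absurd rfl h
  | [γ], _, i => by simp [LTL.bigConj]
  | γ :: δ :: l, _, i => by
      simp only [LTL.bigConj, LTL.Sat, LTL.sat_bigConj w (δ :: l) _ i, List.forall_mem_cons]

section Encoding

variable {A FC B : Type} [Fintype B] [DecidableEq B]
  (b : A → Finset B) (hb : ∀ a, (b a).Nonempty)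

theorem sat_bEnc_iff (a : A) (w : ℕ → Set (FC ⊕ B)) (i : ℕ) :
    LTL.Sat w (bEnc b hb a) i ↔ ∀ j, (Sum.inr j : FC ⊕ B) ∈ w i ↔ j ∈ b a := by
  simp only [bEnc, LTL.sat_bigConj, List.forall_mem_append, List.forall_mem_map,
    Finset.mem_toList, Finset.mem_sdiff, Finset.mem_univ, true_and, LTL.Sat]
  constructor
  · rintro ⟨hmem, hnmem⟩ j
    by_cases hj : j ∈ b a
    · exact iff_of_true (hmem j hj) hj
    · exact iff_of_false (hnmem j hj) hj
  · intro h
    exact ⟨fun j => (h j).2, fun j => mt (h j).1⟩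

theorem sat_gammaTr_iff (φ : HyLTL A FC) (w : ℕ → Set (FC ⊕ B)) (i : ℕ) :
    LTL.Sat w (gammaTr b hb φ) i ↔
      (∀ j, (Sum.inr j : FC ⊕ B) ∉ w i) ∧ LTL.Sat w (gamma0 b hb φ) i := by
  simp only [gammaTr, LTL.sat_bigConj, List.forall_mem_append, List.forall_mem_map,
    Finset.mem_toList, Finset.mem_univ, true_implies, List.forall_mem_singleton, LTL.Sat]

end Encoding

section SigmaTrace

variable {X A FC B : Type} (I : FC → FlowConstraint X) (b : A → Finset B)
  (α : HybridTrace X A)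

theorem inl_mem_sigmaTrace_iff (i : ℕ) (f : FC) :
    (Sum.inl f : FC ⊕ B) ∈ SigmaTrace I b α i ↔ (α.traj i).sat (I f) := by
  cases i <;> simp [SigmaTrace]

theorem inr_notMem_sigmaTrace_zero (j : B) :
    (Sum.inr j : FC ⊕ B) ∉ SigmaTrace I b α 0 := by
  simp [SigmaTrace]

theorem inr_mem_sigmaTrace_succ_iff (n : ℕ) (j : B) :
    (Sum.inr j : FC ⊕ B) ∈ SigmaTrace I b α (n + 1) ↔ j ∈ b (α.act n) := by
  simp [SigmaTrace]

variable [Fintype B] [DecidableEq B] {b} (hb : ∀ a, (b a).Nonempty)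

theorem sat_bEnc_sigmaTrace_iff (hinj : Function.Injective b) (a : A) (i : ℕ) :
    LTL.Sat (SigmaTrace I b α) (bEnc b hb a) i ↔ HyLTL.Sat I α (.act a) i := by
  rw [sat_bEnc_iff]
  cases i with
  | zero =>
    obtain ⟨j, hj⟩ := hb a
    simp only [HyLTL.Sat, lt_irrefl, false_and, iff_false, not_forall]
    exact ⟨j, fun h => inr_notMem_sigmaTrace_zero I b α j (h.2 hj)⟩
  | succ n =>
    simp only [inr_mem_sigmaTrace_succ_iff, ← Finset.ext_iff, hinj.eq_iff, HyLTL.Sat,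
      Nat.succ_pos, true_and, Nat.add_sub_cancel]

theorem sat_gamma0_sigmaTrace_iff (hinj : Function.Injective b) (φ : HyLTL A FC) (i : ℕ) :
    LTL.Sat (SigmaTrace I b α) (gamma0 b hb φ) i ↔ HyLTL.Sat I α φ i := by
  induction φ generalizing i with
  | flow f => exact inl_mem_sigmaTrace_iff I b α i f
  | act a => exact sat_bEnc_sigmaTrace_iff I α hb hinj a i
  | not φ ih => exact not_congr (ih i)
  | and φ ψ ihφ ihψ => exact and_congr (ihφ i) (ihψ i)
  | or φ ψ ihφ ihψ => exact or_congr (ihφ i) (ihψ i)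
  | next φ ih => exact ih (i + 1)
  | untl φ ψ ihφ ihψ => simp only [gamma0, LTL.Sat, HyLTL.Sat, ihφ, ihψ]
  | rel φ ψ ihφ ihψ => simp only [gamma0, LTL.Sat, HyLTL.Sat, ihφ, ihψ]

end SigmaTrace

theorem stmt6_general {X A FC B Q : Type}
    [Fintype B] [DecidableEq B]
    (I : FC → FlowConstraint X) (b : A → Finset B)
    (hb : ∀ a, (b a).Nonempty) (hinj : Function.Injective b)
    (φ : HyLTL A FC)
    (𝒜 : Buchi Q (Set (FC ⊕ B)))
    (hlang : ∀ w : ℕ → Set (FC ⊕ B), 𝒜.Accepts w ↔ LTL.Sat w (gammaTr b hb φ) 0)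
    (α : HybridTrace X A) :
    HyLTL.Sat I α φ 0 ↔ 𝒜.Accepts (SigmaTrace I b α) := by
  rw [hlang, sat_gammaTr_iff, sat_gamma0_sigmaTrace_iff I α hb hinj]
  exact (and_iff_right (inr_notMem_sigmaTrace_zero I b α)).symm

theorem stmt6 {X A FC B Q : Type} [Fintype X] [Fintype A] [Fintype FC]
    [Fintype B] [DecidableEq B] [Finite Q]
    (I : FC → FlowConstraint X) (b : A → Finset B)
    (hb : ∀ a, (b a).Nonempty) (hinj : Function.Injective b)
    (φ : HyLTL A FC) (hφ : φ.Positive)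
    (𝒜 : Buchi Q (Set (FC ⊕ B)))
    (hlang : ∀ w : ℕ → Set (FC ⊕ B), 𝒜.Accepts w ↔ LTL.Sat w (gammaTr b hb φ) 0)
    (α : HybridTrace X A) :
    HyLTL.Sat I α φ 0 ↔ 𝒜.Accepts (SigmaTrace I b α) :=
  stmt6_general I b hb hinj φ 𝒜 hlang α
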